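/- arXiv:2605.26865 — 5 statements merged into one kernel-verified Lean document; each statement's English description precedes it below -/
import Mathlib

section
/- Let G be a connected bipartite graph with bipartition X ⊔ Y that is matching-covered (every edge lies in a perfect matching) and 2-connected. Then |X| = |Y|, and for every non-empty proper subset A ⊊ X, the neighborhood satisfies |N_G(A)| ≥ |A| + 1. -/
attribute [local instance] Classical.propDecidable

/-- `X ⊔ Y` is a bipartition of the graph `G`. -/
def IsBipartition {V : Type*} (G : SimpleGraph V) [Fintype V] (X Y : Finset V) : Prop :=
  Disjoint X Y ∧ X ∪ Y = Finset.univ ∧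
    ∀ x y : V, G.Adj x y → (x ∈ X ∧ y ∈ Y) ∨ (x ∈ Y ∧ y ∈ X)

/-- `G` is connected and every edge of `G` lies in a perfect matching. -/
def MatchingCovered {V : Type*} (G : SimpleGraph V) : Prop :=
  G.Connected ∧ ∀ e ∈ G.edgeSet, ∃ M : G.Subgraph, M.IsPerfectMatching ∧ e ∈ M.edgeSet

/-- `G` is connected and remains connected after deleting any single vertex. -/
def TwoConnected {V : Type*} (G : SimpleGraph V) : Prop :=
  G.Connected ∧ ∀ v : V, (G.induce {u : V | u ≠ v}).Connected

/-- The neighborhood of the vertex set `A` in `G`. -/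
noncomputable def nbhd {V : Type*} [Fintype V] (G : SimpleGraph V) (A : Finset V) : Finset V :=
  Finset.univ.filter (fun y => ∃ x ∈ A, G.Adj x y)

/-! Every vertex of `A` has a partner in `nbhd G A` under a perfect matching `M`; if moreover an
`M`-edge joins a vertex outside `A` to `nbhd G A`, its endpoint in `nbhd G A` is nobody's partner
from `A`, so `nbhd G A` has at least `|A| + 1` elements. Such an edge exists whenever `A` is a
nonempty proper subset of `X`, because connectivity yields an edge leaving `A ∪ nbhd G A`, and
that edge lies in a perfect matching. For `|X| = |Y|`, 2-connectivity rules out the one-vertex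
graph, so `G` has an edge and hence a perfect matching, which is a bijection between `X` and
`Y`. -/

section

variable {V : Type*} {G : SimpleGraph V}

theorem SimpleGraph.Subgraph.IsPerfectMatching.exists_injective_adj {M : G.Subgraph}
    (hM : M.IsPerfectMatching) : ∃ f : V → V, Function.Injective f ∧ ∀ v, M.Adj v (f v) := by
  choose f hf using fun v => (hM.1 (hM.2 v)).exists
  exact ⟨f, fun a b hab => hM.1.eq_of_adj_right (hf a) (hab ▸ hf b), hf⟩

theorem SimpleGraph.IsBipartiteWith.card_eq_of_isPerfectMatching {X Y : Finset V}
    (hXY : G.IsBipartiteWith X Y) {M : G.Subgraph} (hM : M.IsPerfectMatching) :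
    X.card = Y.card := by
  obtain ⟨f, hf, hMf⟩ := hM.exists_injective_adj
  exact le_antisymm
    (Finset.card_le_card_of_injOn f (fun v hv => hXY.mem_of_mem_adj hv (M.adj_sub (hMf v)))
      hf.injOn)
    (Finset.card_le_card_of_injOn f (fun v hv => hXY.symm.mem_of_mem_adj hv (M.adj_sub (hMf v)))
      hf.injOn)

theorem TwoConnected.nontrivial (h : TwoConnected G) : Nontrivial V := by
  obtain ⟨v⟩ := h.1.nonempty
  obtain ⟨⟨u, hu⟩⟩ := (h.2 v).nonempty
  exact ⟨⟨u, v, hu⟩⟩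

theorem MatchingCovered.exists_isPerfectMatching [Nontrivial V] (h : MatchingCovered G) :
    ∃ M : G.Subgraph, M.IsPerfectMatching := by
  obtain ⟨v⟩ := h.1.nonempty
  obtain ⟨u, huv⟩ := h.1.preconnected.exists_adj_of_nontrivial v
  obtain ⟨M, hM, -⟩ := h.2 s(v, u) huv
  exact ⟨M, hM⟩

variable [Fintype V]

theorem IsBipartition.isBipartiteWith {X Y : Finset V} (h : IsBipartition G X Y) :
    G.IsBipartiteWith X Y :=
  ⟨Finset.disjoint_coe.mpr h.1, fun x y hxy => h.2.2 x y hxy⟩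

theorem SimpleGraph.IsBipartiteWith.nbhd_subset {X Y : Finset V} (hXY : G.IsBipartiteWith X Y)
    {A : Finset V} (hA : A ⊆ X) : nbhd G A ⊆ Y := by
  intro y hy
  obtain ⟨x, hx, hxy⟩ := (Finset.mem_filter.mp hy).2
  exact hXY.mem_of_mem_adj (Finset.mem_coe.mpr (hA hx)) hxy

theorem SimpleGraph.Preconnected.exists_adj_mem_nbhd (hG : G.Preconnected) {A : Finset V}
    {a b : V} (ha : a ∈ A) (hbA : b ∉ A) (hbN : b ∉ nbhd G A) :
    ∃ u ∉ A, ∃ y ∈ nbhd G A, G.Adj u y := by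
  obtain ⟨p⟩ := hG a b
  obtain ⟨d, -, hd, hd'⟩ :=
    p.exists_boundary_dart (↑A ∪ ↑(nbhd G A)) (Or.inl ha) (by simp [hbA, hbN])
  simp only [Set.mem_union, Finset.mem_coe, not_or] at hd hd'
  have hdN : d.fst ∈ nbhd G A := hd.resolve_left fun hA =>
    hd'.2 (Finset.mem_filter.mpr ⟨Finset.mem_univ _, d.fst, hA, d.adj⟩)
  exact ⟨d.snd, hd'.1, d.fst, hdN, d.adj.symm⟩

theorem SimpleGraph.Subgraph.IsPerfectMatching.card_add_one_le_card_nbhd {M : G.Subgraph}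
    (hM : M.IsPerfectMatching) {A : Finset V} {u y : V} (hu : u ∉ A) (hy : y ∈ nbhd G A)
    (huy : M.Adj u y) : A.card + 1 ≤ (nbhd G A).card := by
  obtain ⟨f, hf, hMf⟩ := hM.exists_injective_adj
  have himage : A.image f ⊆ nbhd G A := by
    rintro _ hfx
    obtain ⟨x, hx, rfl⟩ := Finset.mem_image.mp hfx
    exact Finset.mem_filter.mpr ⟨Finset.mem_univ _, x, hx, M.adj_sub (hMf x)⟩
  have hy_notin : y ∉ A.image f := by
    rintro hfx
    obtain ⟨x, hx, rfl⟩ := Finset.mem_image.mp hfx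
    exact hu (hM.1.eq_of_adj_right (hMf x) huy ▸ hx)
  calc A.card + 1 = (insert y (A.image f)).card := by
        rw [Finset.card_insert_of_notMem hy_notin, Finset.card_image_of_injective _ hf]
    _ ≤ (nbhd G A).card := Finset.card_le_card (Finset.insert_subset hy himage)

end

theorem stmt0 {V : Type*} [Fintype V] (G : SimpleGraph V) (X Y : Finset V)
    (hbip : IsBipartition G X Y) (hmc : MatchingCovered G) (h2 : TwoConnected G) :
    X.card = Y.card ∧
      ∀ A : Finset V, A ⊆ X → A.Nonempty → A ≠ X → A.card + 1 ≤ (nbhd G A).card := by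
  have hXY := hbip.isBipartiteWith
  refine ⟨?_, fun A hAX ⟨a, ha⟩ hAne => ?_⟩
  · have := h2.nontrivial
    obtain ⟨M, hM⟩ := hmc.exists_isPerfectMatching
    exact hXY.card_eq_of_isPerfectMatching hM
  · obtain ⟨b, hbX, hbA⟩ := Finset.exists_of_ssubset (Finset.ssubset_iff_subset_ne.mpr ⟨hAX, hAne⟩)
    have hbN : b ∉ nbhd G A := fun hbN =>
      Set.disjoint_left.mp hXY.disjoint (Finset.mem_coe.mpr hbX) (hXY.nbhd_subset hAX hbN)
    obtain ⟨u, hu, y, hy, huy⟩ := hmc.1.preconnected.exists_adj_mem_nbhd ha hbA hbN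
    obtain ⟨M, hM, huyM⟩ := hmc.2 s(u, y) huy
    exact hM.card_add_one_le_card_nbhd hu hy huyM
end

section
/- Let G be a 2-connected matching-covered bipartite graph with bipartition X ⊔ Y. Suppose U, V ⊆ X satisfy |N_G(U)| = |U| + 1, |N_G(V)| = |V| + 1, U ∪ V ⊊ X, and N_G(U) ∩ N_G(V) ≠ ∅. Then |N_G(U ∪ V)| = |U ∪ V| + 1. -/
/-!
Matching-covered bipartite graphs satisfy strict Hall: for `∅ ≠ A ⊊ X`, connectivity gives an
edge `xy` with `x ∉ A`, `y ∈ N(A)`, and a perfect matching through `xy` matches `A ∪ {x}` into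
`N(A)`. Since `N(U ∪ W) = N(U) ∪ N(W)` and `N(U ∩ W) ⊆ N(U) ∩ N(W)`, submodularity gives
`|N(U ∪ W)| ≤ |U| + |W| + 2 - |N(U) ∩ N(W)|`, and `|N(U) ∩ N(W)| ≥ |U ∩ W| + 1` by strict Hall
for `U ∩ W` (or by `N(U) ∩ N(W) ≠ ∅` when `U ∩ W = ∅`). Strict Hall for `U ∪ W` gives the
reverse inequality.
-/

attribute [local instance] Classical.propDecidable

/-- `T` is a tight subset: `|N_G(T)| = |T| + 1`. -/
def Tight {V : Type*} [Fintype V] (G : SimpleGraph V) (T : Finset V) : Prop :=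
  (nbhd G T).card = T.card + 1

/-- `T ⊆ X` is an acceptable set of the bipartite graph `G` with bipartition `X ⊔ Y`:
the graph induced by the edges between `T` and `N_G(T)` is connected, and the induced
subgraph on `(X \ T) ⊔ (Y \ N_G(T))` is connected with at least one edge. -/
def Acceptable {V : Type*} [Fintype V] (G : SimpleGraph V) (X Y T : Finset V) : Prop :=
  T.Nonempty ∧ T ⊆ X ∧
    (G.induce (↑(T ∪ nbhd G T) : Set V)).Connected ∧
    (G.induce (↑((X \ T) ∪ (Y \ nbhd G T)) : Set V)).Connected ∧
    ∃ x ∈ X \ T, ∃ y ∈ Y \ nbhd G T, G.Adj x y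

namespace SimpleGraph

variable {V : Type*} [Fintype V] {G : SimpleGraph V} {A B : Finset V}

@[simp]
lemma mem_nbhd {y : V} : y ∈ nbhd G A ↔ ∃ x ∈ A, G.Adj x y := by
  simp [nbhd]

lemma nbhd_union : nbhd G (A ∪ B) = nbhd G A ∪ nbhd G B := by
  ext y
  simp only [mem_nbhd, Finset.mem_union, or_and_right, exists_or]

lemma nbhd_inter_subset : nbhd G (A ∩ B) ⊆ nbhd G A ∩ nbhd G B := by
  intro y hy
  obtain ⟨x, hx, hxy⟩ := mem_nbhd.1 hy
  exact Finset.mem_inter.2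
    ⟨mem_nbhd.2 ⟨x, Finset.mem_of_mem_inter_left hx, hxy⟩,
      mem_nbhd.2 ⟨x, Finset.mem_of_mem_inter_right hx, hxy⟩⟩

lemma nbhd_subset_of_isBipartition {X Y : Finset V} (hbip : IsBipartition G X Y) (hA : A ⊆ X) :
    nbhd G A ⊆ Y := by
  intro y hy
  obtain ⟨x, hx, hxy⟩ := mem_nbhd.1 hy
  rcases hbip.2.2 x y hxy with ⟨_, hyY⟩ | ⟨hxY, _⟩
  · exact hyY
  · exact absurd (hA hx) (Finset.disjoint_right.1 hbip.1 hxY)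

lemma card_add_one_le_card_nbhd_of_isPerfectMatching {M : G.Subgraph}
    (hM : M.IsPerfectMatching) {x y : V} (hx : x ∉ A) (hy : y ∈ nbhd G A) (hxy : M.Adj x y) :
    A.card + 1 ≤ (nbhd G A).card := by
  choose p hp using fun v => (hM.1 (hM.2 v)).exists
  have hpx : p x = y := hM.1.eq_of_adj_left (hp x) hxy
  rw [← Finset.card_insert_of_notMem hx]
  refine Finset.card_le_card_of_injOn p ?_
    (fun a _ b _ hab => hM.1.eq_of_adj_right (hp a) (hab ▸ hp b))
  intro v hv
  rcases Finset.mem_insert.1 hv with rfl | hvA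
  · rwa [hpx]
  · exact mem_nbhd.2 ⟨v, hvA, M.adj_sub (hp v)⟩

/-- Some edge leaves `A ∪ N(A)`; it cannot start in `A`, so it joins `N(A)` to a vertex
outside `A`. -/
lemma exists_adj_nbhd_of_ssubset {X Y : Finset V} (hbip : IsBipartition G X Y)
    (hconn : G.Connected) (hA : A ⊆ X) (hne : A.Nonempty) (hAX : A ≠ X) :
    ∃ x ∉ A, ∃ y ∈ nbhd G A, G.Adj x y := by
  obtain ⟨a, ha⟩ := hne
  obtain ⟨b, hbX, hbA⟩ := Finset.exists_of_ssubset (lt_of_le_of_ne hA hAX)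
  have hbN : b ∉ nbhd G A := fun hb =>
    Finset.disjoint_left.1 hbip.1 hbX (nbhd_subset_of_isBipartition hbip hA hb)
  obtain ⟨p⟩ := hconn.preconnected a b
  obtain ⟨d, -, hdS, hdS'⟩ :=
    p.exists_boundary_dart (↑(A ∪ nbhd G A)) (by simp [ha]) (by simp [hbA, hbN])
  simp only [Finset.coe_union, Set.mem_union, Finset.mem_coe, not_or] at hdS hdS'
  rcases hdS with hd | hd
  · exact absurd (mem_nbhd.2 ⟨_, hd, d.adj⟩) hdS'.2
  · exact ⟨d.snd, hdS'.1, d.fst, hd, d.adj.symm⟩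

lemma card_add_one_le_card_nbhd {X Y : Finset V} (hbip : IsBipartition G X Y)
    (hmc : MatchingCovered G) (hA : A ⊆ X) (hne : A.Nonempty) (hAX : A ≠ X) :
    A.card + 1 ≤ (nbhd G A).card := by
  obtain ⟨x, hx, y, hy, hxy⟩ := exists_adj_nbhd_of_ssubset hbip hmc.1 hA hne hAX
  obtain ⟨M, hM, hxyM⟩ := hmc.2 s(x, y) hxy
  exact card_add_one_le_card_nbhd_of_isPerfectMatching hM hx hy hxyM

lemma card_inter_add_one_le_card_nbhd_inter {X Y : Finset V} (hbip : IsBipartition G X Y)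
    (hmc : MatchingCovered G) (hA : A ⊆ X) (hB : B ⊆ X) (hAB : A ∪ B ≠ X)
    (hmeet : (nbhd G A ∩ nbhd G B).Nonempty) :
    (A ∩ B).card + 1 ≤ (nbhd G A ∩ nbhd G B).card := by
  rcases (A ∩ B).eq_empty_or_nonempty with hAB₀ | hAB₀
  · simpa [hAB₀] using hmeet.card_pos
  have hABX : A ∩ B ≠ X :=
    (Finset.inter_subset_union.trans_ssubset
      (lt_of_le_of_ne (Finset.union_subset hA hB) hAB)).ne
  exact (card_add_one_le_card_nbhd hbip hmc (Finset.inter_subset_left.trans hA) hAB₀ hABX).trans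
    (Finset.card_le_card nbhd_inter_subset)

end SimpleGraph

open SimpleGraph

theorem stmt1_general {V : Type*} [Fintype V] (G : SimpleGraph V) (X Y : Finset V)
    (hbip : IsBipartition G X Y) (hmc : MatchingCovered G)
    (U W : Finset V) (hU : U ⊆ X) (hW : W ⊆ X)
    (hUt : Tight G U) (hWt : Tight G W)
    (hproper : U ∪ W ≠ X)
    (hmeet : (nbhd G U ∩ nbhd G W).Nonempty) :
    Tight G (U ∪ W) := by
  have hUW : U ∪ W ⊆ X := Finset.union_subset hU hW
  obtain ⟨y, hy⟩ := hmeet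
  obtain ⟨x, hx, -⟩ := mem_nbhd.1 (Finset.mem_inter.1 hy).1
  have hlower := card_add_one_le_card_nbhd hbip hmc hUW ⟨x, Finset.mem_union_left W hx⟩ hproper
  have hinter := card_inter_add_one_le_card_nbhd_inter hbip hmc hU hW hproper ⟨y, hy⟩
  have hN := Finset.card_union_add_card_inter (nbhd G U) (nbhd G W)
  have hUW_card := Finset.card_union_add_card_inter U W
  unfold Tight at hUt hWt ⊢
  rw [nbhd_union] at hlower ⊢
  omega

theorem stmt1 {V : Type*} [Fintype V] (G : SimpleGraph V) (X Y : Finset V)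
    (hbip : IsBipartition G X Y) (hmc : MatchingCovered G) (h2 : TwoConnected G)
    (U W : Finset V) (hU : U ⊆ X) (hW : W ⊆ X)
    (hUt : Tight G U) (hWt : Tight G W)
    (hproper : U ∪ W ≠ X)
    (hmeet : (nbhd G U ∩ nbhd G W).Nonempty) :
    Tight G (U ∪ W) :=
  stmt1_general G X Y hbip hmc U W hU hW hUt hWt hproper hmeet
end

section
/- Let G be a 2-connected matching-covered bipartite graph with bipartition X ⊔ Y, |X| = |Y| = n, identified with vertex set of size 2n. Then the all-ones vector 1 ∈ ℤ^{2n} lies in the interior of n·P_G, and it is the unique lattice point in the interior of n·P_G. -/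
attribute [local instance] Classical.propDecidable
open scoped Pointwise

/-- The vector `e_x + e_y ∈ ℝ^V` associated with the edge `{x, y}`. -/
def edgeVec {V : Type*} [DecidableEq V] (x y : V) : V → ℝ :=
  fun v => (if v = x then (1 : ℝ) else 0) + (if v = y then (1 : ℝ) else 0)

/-- The set of vectors `ρ(e) = e_i + e_j` for the edges `e = {i, j}` of `G`;
the edge polytope `P_G` is its convex hull. -/
def edgeVecs {V : Type*} [DecidableEq V] (G : SimpleGraph V) : Set (V → ℝ) :=
  {f | ∃ x y : V, G.Adj x y ∧ f = edgeVec x y}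

/-! Choosing, for every edge, a perfect matching through it and averaging their incidence
vectors writes `(1/n) • 1` as a convex combination of the edge vectors in which every
edge has positive weight; such a point lies in the relative interior of `P_G`, so `1` lies in
that of `n • P_G`. Conversely, the points of `n • P_G` are nonnegative with coordinate sums
`n` over `X` and over `Y`. A relative interior point can be pushed a little beyond itself,
away from any edge vector `e_v + e_u`, so all its coordinates are positive; if they are
integers they are at least `1`, and the coordinate sums force them all to equal `1`. -/

section IntrinsicInterior

open Filter Topology

variable {E : Type*} [NormedAddCommGroup E] [NormedSpace ℝ E] {s : Set E} {x y : E}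

theorem mem_intrinsicInterior_iff_ball :
    x ∈ intrinsicInterior ℝ s ↔ x ∈ s ∧ ∃ ε > 0, Metric.ball x ε ∩ affineSpan ℝ s ⊆ s := by
  constructor
  · rintro ⟨x, hx, rfl⟩
    obtain ⟨ε, hε, hball⟩ := Metric.mem_nhdsWithin_iff.1 <|
      mem_nhds_subtype_iff_nhdsWithin.1 (mem_interior_iff_mem_nhds.1 hx)
    refine ⟨Set.mem_preimage.1 (interior_subset hx), ε, hε, fun z hz => ?_⟩
    obtain ⟨_, hw, rfl⟩ := hball (by simpa using hz)
    exact hw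
  · rintro ⟨hx, ε, hε, hball⟩
    refine ⟨⟨x, subset_affineSpan ℝ s hx⟩, ?_, rfl⟩
    rw [mem_interior_iff_mem_nhds, mem_nhds_subtype_iff_nhdsWithin, Metric.mem_nhdsWithin_iff]
    exact ⟨ε, hε, fun z hz => ⟨⟨z, hz.2⟩, hball hz, rfl⟩⟩

theorem exists_add_smul_sub_mem_of_mem_intrinsicInterior (hx : x ∈ intrinsicInterior ℝ s)
    (hy : y ∈ s) : ∃ ε : ℝ, 0 < ε ∧ x + ε • (x - y) ∈ s := by
  obtain ⟨hxs, δ, hδ, hball⟩ := mem_intrinsicInterior_iff_ball.1 hx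
  have hlim : Tendsto (fun ε : ℝ => x + ε • (x - y)) (𝓝[>] 0) (𝓝 x) := by
    have : Continuous (fun ε : ℝ => x + ε • (x - y)) := by fun_prop
    exact (this.tendsto' 0 x (by simp)).mono_left nhdsWithin_le_nhds
  obtain ⟨ε, hεδ, hε⟩ :=
    ((hlim.eventually (Metric.ball_mem_nhds x hδ)).and self_mem_nhdsWithin).exists
  refine ⟨ε, hε, hball ⟨hεδ, ?_⟩⟩
  have hline : x + ε • (x - y) = AffineMap.lineMap y x (1 + ε) := by
    rw [AffineMap.lineMap_apply_module']
    module
  rw [SetLike.mem_coe, hline]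
  exact AffineMap.lineMap_mem _ (subset_affineSpan ℝ s hy) (subset_affineSpan ℝ s hxs)

theorem pos_of_mem_intrinsicInterior {ℓ : E →ₗ[ℝ] ℝ} (hℓ : ∀ z ∈ s, 0 ≤ ℓ z)
    (hx : x ∈ intrinsicInterior ℝ s) (hy : y ∈ s) (hℓy : 0 < ℓ y) : 0 < ℓ x := by
  obtain ⟨ε, hε, hmem⟩ := exists_add_smul_sub_mem_of_mem_intrinsicInterior hx hy
  have h := hℓ _ hmem
  rw [map_add, map_smul, map_sub, smul_eq_mul] at h
  nlinarith [mul_pos hε hℓy]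

theorem Convex.combo_intrinsicInterior_self_mem_intrinsicInterior (hs : Convex ℝ s)
    (hx : x ∈ intrinsicInterior ℝ s) (hy : y ∈ s) {a b : ℝ} (ha : 0 < a) (hb : 0 ≤ b)
    (hab : a + b = 1) : a • x + b • y ∈ intrinsicInterior ℝ s := by
  obtain ⟨hxs, ε, hε, hball⟩ := mem_intrinsicInterior_iff_ball.1 hx
  have hw : a • x + b • y ∈ s := hs hxs hy ha.le hb hab
  refine mem_intrinsicInterior_iff_ball.2 ⟨hw, a * ε, mul_pos ha hε, fun z ⟨hz, hzs⟩ => ?_⟩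
  set x' := a⁻¹ • (z - (a • x + b • y)) + x
  have hx' : x' ∈ s := by
    refine hball ⟨?_, AffineSubspace.vadd_mem_of_mem_direction ?_ (subset_affineSpan ℝ s hxs)⟩
    · rw [Metric.mem_ball, dist_eq_norm, add_sub_cancel_right, norm_smul, ← dist_eq_norm,
        Real.norm_of_nonneg (inv_nonneg.2 ha.le), inv_mul_lt_iff₀ ha]
      exact hz
    · exact Submodule.smul_mem _ _
        (AffineSubspace.vsub_mem_direction hzs (subset_affineSpan ℝ s hw))
  have hz_eq : z = a • x' + b • y := by
    simp only [x', smul_add, smul_smul, mul_inv_cancel₀ ha.ne', one_smul]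
    abel
  exact hz_eq ▸ hs hx' hy ha.le hb hab

theorem intrinsicInterior_smul {c : ℝ} (hc : c ≠ 0) (s : Set E) :
    intrinsicInterior ℝ (c • s) = c • intrinsicInterior ℝ s :=
  (ContinuousLinearEquiv.smulLeft (Units.mk0 c hc) : E ≃L[ℝ] E).toContinuousAffineEquiv
    |>.intrinsicInterior_image s

variable [FiniteDimensional ℝ E]

theorem Finset.sum_smul_mem_intrinsicInterior_convexHull {s : Finset E} {w : E → ℝ}
    (hw₀ : ∀ y ∈ s, 0 < w y) (hw₁ : ∑ y ∈ s, w y = 1) :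
    ∑ y ∈ s, w y • y ∈ intrinsicInterior ℝ (convexHull ℝ (s : Set E)) := by
  have hs : s.Nonempty := Finset.nonempty_of_sum_ne_zero (hw₁ ▸ one_ne_zero)
  obtain ⟨_, hz⟩ := (intrinsicInterior_nonempty (convex_convexHull ℝ _)).2 hs.to_set.convexHull
  obtain ⟨ν, hν₀, hν₁, rfl⟩ := Finset.mem_convexHull'.1 (intrinsicInterior_subset hz)
  -- With `z` a relative interior point, write the given point as `a • z + (1 - a) • u`,
  -- `u` in the hull, for `a` small compared to the weights `w`.
  set a := s.inf' hs w / 2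
  have ha : 0 < a := half_pos ((Finset.lt_inf'_iff hs).2 hw₀)
  have hwa : ∀ y ∈ s, a ≤ w y / 2 := fun y hy =>
    div_le_div_of_nonneg_right (Finset.inf'_le w hy) zero_le_two
  have hν_le : ∀ y ∈ s, ν y ≤ 1 := fun y hy => hν₁ ▸ Finset.single_le_sum hν₀ hy
  have hw_le : ∀ y ∈ s, w y ≤ 1 := fun y hy =>
    hw₁ ▸ Finset.single_le_sum (fun y hy => (hw₀ y hy).le) hy
  obtain ⟨y₀, hy₀⟩ := hs
  have ha1 : a < 1 := by linarith [hwa y₀ hy₀, hw_le y₀ hy₀]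
  set u := ∑ y ∈ s, ((w y - a * ν y) / (1 - a)) • y
  have hu : u ∈ convexHull ℝ (s : Set E) := by
    refine (convex_convexHull ℝ _).sum_mem (fun y hy => div_nonneg ?_ (by linarith)) ?_
      (fun y hy => subset_convexHull ℝ _ hy)
    · nlinarith [hwa y hy, hν_le y hy, hν₀ y hy, hw₀ y hy]
    · rw [← Finset.sum_div, Finset.sum_sub_distrib, ← Finset.mul_sum, hw₁, hν₁, mul_one,
        div_self (by linarith)]
  have hsplit : ∑ y ∈ s, w y • y = a • ∑ y ∈ s, ν y • y + (1 - a) • u := by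
    simp only [u, Finset.smul_sum, smul_smul, ← Finset.sum_add_distrib, ← add_smul]
    refine Finset.sum_congr rfl fun y _ => ?_
    rw [mul_div_cancel₀ _ (by linarith : (1 - a) ≠ 0), add_sub_cancel]
  rw [hsplit]
  exact (convex_convexHull ℝ _).combo_intrinsicInterior_self_mem_intrinsicInterior hz hu ha
    (by linarith) (by ring)

theorem Finset.centerMass_mem_intrinsicInterior_convexHull {ι : Type*} {t : Finset ι}
    (ht : t.Nonempty) {w : ι → ℝ} (hw₀ : ∀ i ∈ t, 0 < w i) (z : ι → E) :
    t.centerMass w z ∈ intrinsicInterior ℝ (convexHull ℝ (z '' t)) := by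
  classical
  have hW : 0 < ∑ i ∈ t, w i := Finset.sum_pos hw₀ ht
  have hmaps : ∀ i ∈ t, z i ∈ t.image z := fun i hi => Finset.mem_image_of_mem z hi
  let μ : E → ℝ := fun p => (∑ i ∈ t, w i)⁻¹ * ∑ i ∈ t with z i = p, w i
  have hμ₀ : ∀ p ∈ t.image z, 0 < μ p := by
    intro p hp
    obtain ⟨i, hi, rfl⟩ := Finset.mem_image.1 hp
    exact mul_pos (inv_pos.2 hW)
      (Finset.sum_pos (fun j hj => hw₀ j (Finset.mem_filter.1 hj).1) ⟨i, by simp [hi]⟩)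
  have hμ₁ : ∑ p ∈ t.image z, μ p = 1 := by
    rw [← Finset.mul_sum, Finset.sum_fiberwise_of_maps_to hmaps, inv_mul_cancel₀ hW.ne']
  have hmass : t.centerMass w z = ∑ p ∈ t.image z, μ p • p := by
    rw [Finset.centerMass, ← Finset.sum_fiberwise_of_maps_to hmaps (f := fun i => w i • z i),
      Finset.smul_sum]
    refine Finset.sum_congr rfl fun p _ => ?_
    rw [mul_smul, Finset.sum_smul]
    congr 1
    exact Finset.sum_congr rfl fun i hi => by rw [(Finset.mem_filter.1 hi).2]
  rw [hmass, ← Finset.coe_image]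
  exact Finset.sum_smul_mem_intrinsicInterior_convexHull hμ₀ hμ₁

end IntrinsicInterior

namespace SimpleGraph

variable {V : Type*} [Fintype V] {G : SimpleGraph V}

noncomputable def adjPairs (G : SimpleGraph V) : Finset (V × V) := {p | G.Adj p.1 p.2}

theorem sum_adjPairs_ite {β : Type*} [AddCommMonoid β] (M : G.Subgraph) (F : V × V → β) :
    ∑ p ∈ G.adjPairs, (if M.Adj p.1 p.2 then F p else 0) =
      ∑ x, ∑ y, if M.Adj x y then F (x, y) else 0 := by
  rw [adjPairs, Finset.sum_filter, ← Fintype.sum_prod_type']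
  refine Fintype.sum_congr _ _ fun p => ?_
  by_cases h : M.Adj p.1 p.2
  · simp [h, M.adj_sub h]
  · simp [h]

namespace Subgraph

variable {M : G.Subgraph}

theorem IsPerfectMatching.sum_adj_ite (hM : M.IsPerfectMatching) (v : V) :
    ∑ w, (if M.Adj v w then (1 : ℝ) else 0) = 1 := by
  obtain ⟨w, hw, huniq⟩ := isPerfectMatching_iff.1 hM v
  calc ∑ u, (if M.Adj v u then (1 : ℝ) else 0)
      = ∑ u, if u = w then (1 : ℝ) else 0 :=
        Fintype.sum_congr _ _ fun u => if_congr ⟨huniq u, fun h => h ▸ hw⟩ rfl rfl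
    _ = 1 := by simp

theorem IsPerfectMatching.sum_adjPairs_ite_one (hM : M.IsPerfectMatching) :
    ∑ p ∈ G.adjPairs, (if M.Adj p.1 p.2 then (1 : ℝ) else 0) = Fintype.card V := by
  rw [sum_adjPairs_ite]
  simp only [hM.sum_adj_ite, Finset.sum_const, Finset.card_univ, nsmul_eq_mul, mul_one]

theorem IsPerfectMatching.sum_adjPairs_ite_edgeVec [DecidableEq V] (hM : M.IsPerfectMatching) :
    ∑ p ∈ G.adjPairs, (if M.Adj p.1 p.2 then edgeVec p.1 p.2 else 0) = 2 := by
  rw [sum_adjPairs_ite]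
  funext v
  have hsplit : ∀ x y, (if M.Adj x y then edgeVec x y else 0) v =
      (if x = v then (if M.Adj v y then (1 : ℝ) else 0) else 0) +
        (if y = v then (if M.Adj v x then 1 else 0) else 0) := by
    intro x y
    by_cases h : M.Adj x y <;> by_cases hx : x = v <;> by_cases hy : y = v <;>
      simp_all [edgeVec, M.adj_comm, eq_comm]
  simp only [Finset.sum_apply, hsplit, Finset.sum_add_distrib, Finset.sum_ite_irrel,
    Finset.sum_const_zero, Finset.sum_ite_eq', Finset.mem_univ, if_true, hM.sum_adj_ite,
    Pi.ofNat_apply]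
  norm_num

end Subgraph

end SimpleGraph

section EdgeVecs

variable {V : Type*} [DecidableEq V] {G : SimpleGraph V}

theorem convexHull_edgeVecs_subset_nonneg : convexHull ℝ (edgeVecs G) ⊆ Set.Ici 0 :=
  convexHull_min (by rintro _ ⟨x, y, -, rfl⟩ v; unfold edgeVec; positivity) (convex_Ici 0)

variable [Fintype V]

theorem pos_of_mem_intrinsicInterior_convexHull_edgeVecs {f : V → ℝ}
    (hf : f ∈ intrinsicInterior ℝ (convexHull ℝ (edgeVecs G))) {v u : V} (hvu : G.Adj v u) :
    0 < f v := by
  have hnonneg : ∀ g ∈ convexHull ℝ (edgeVecs G), 0 ≤ LinearMap.proj (R := ℝ) v g :=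
    fun g hg => convexHull_edgeVecs_subset_nonneg hg v
  exact pos_of_mem_intrinsicInterior hnonneg hf (subset_convexHull ℝ _ ⟨v, u, hvu, rfl⟩)
    (by simp [edgeVec, hvu.ne])

theorem edgeVecs_eq_image_adjPairs :
    edgeVecs G = (fun p : V × V => edgeVec p.1 p.2) '' G.adjPairs := by
  ext f
  simp [edgeVecs, SimpleGraph.adjPairs, eq_comm]

theorem two_div_card_smul_one_mem_intrinsicInterior_convexHull_edgeVecs
    (hmc : ∀ e ∈ G.edgeSet, ∃ M : G.Subgraph, M.IsPerfectMatching ∧ e ∈ M.edgeSet)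
    {x y : V} (hxy : G.Adj x y) :
    (2 / Fintype.card V : ℝ) • (1 : V → ℝ) ∈ intrinsicInterior ℝ (convexHull ℝ (edgeVecs G)) := by
  have hmatch : ∀ p ∈ G.adjPairs, ∃ M : G.Subgraph, M.IsPerfectMatching ∧ M.Adj p.1 p.2 :=
    fun p hp => by simpa using hmc s(p.1, p.2) (by simpa [SimpleGraph.adjPairs] using hp)
  choose! M hM using hmatch
  have hne : G.adjPairs.Nonempty := ⟨(x, y), by simpa [SimpleGraph.adjPairs] using hxy⟩
  -- Each chosen matching contributes `2` to `∑ c p • edgeVec p.1 p.2` and `card V` to `∑ c p`.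
  set c : V × V → ℝ := fun p => ∑ q ∈ G.adjPairs, if (M q).Adj p.1 p.2 then 1 else 0
  have hc : ∀ p ∈ G.adjPairs, 0 < c p := fun p hp =>
    Finset.sum_pos' (fun q _ => by positivity) ⟨p, hp, by simp [(hM p hp).2]⟩
  have hc_sum : ∑ p ∈ G.adjPairs, c p = G.adjPairs.card * Fintype.card V := by
    rw [Finset.sum_comm, Finset.sum_congr rfl fun q hq => (hM q hq).1.sum_adjPairs_ite_one]
    simp
  have hc_vec : ∑ p ∈ G.adjPairs, c p • edgeVec p.1 p.2 =
      ((G.adjPairs.card : ℝ) * 2) • (1 : V → ℝ) := by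
    simp only [c, Finset.sum_smul, ite_smul, one_smul, zero_smul]
    rw [Finset.sum_comm, Finset.sum_congr rfl fun q hq => (hM q hq).1.sum_adjPairs_ite_edgeVec]
    ext v
    simp
  have hmass : G.adjPairs.centerMass c (fun p => edgeVec p.1 p.2) =
      (2 / Fintype.card V : ℝ) • (1 : V → ℝ) := by
    have : (G.adjPairs.card : ℝ) ≠ 0 := Nat.cast_ne_zero.2 hne.card_pos.ne'
    rw [Finset.centerMass, hc_sum, hc_vec, smul_smul]
    congr 1
    field_simp
  rw [edgeVecs_eq_image_adjPairs, ← hmass]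
  exact Finset.centerMass_mem_intrinsicInterior_convexHull hne hc _

end EdgeVecs

namespace IsBipartition

variable {V : Type*} [Fintype V] {G : SimpleGraph V} {X Y : Finset V}

theorem symm (h : IsBipartition G X Y) : IsBipartition G Y X :=
  ⟨h.1.symm, Finset.union_comm X Y ▸ h.2.1, fun x y hxy => (h.2.2 x y hxy).symm⟩

theorem mem_or_mem (h : IsBipartition G X Y) (v : V) : v ∈ X ∨ v ∈ Y :=
  Finset.mem_union.1 (h.2.1 ▸ Finset.mem_univ v)

theorem card_univ (h : IsBipartition G X Y) : Fintype.card V = X.card + Y.card := by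
  rw [← Finset.card_univ, ← h.2.1, Finset.card_union_of_disjoint h.1]

theorem sum_edgeVec [DecidableEq V] (h : IsBipartition G X Y) {x y : V} (hxy : G.Adj x y) :
    ∑ v ∈ X, edgeVec x y v = 1 := by
  simp only [edgeVec, Finset.sum_add_distrib, Finset.sum_ite_eq']
  rcases h.2.2 x y hxy with ⟨hx, hy⟩ | ⟨hx, hy⟩
  · simp [hx, Finset.disjoint_right.1 h.1 hy]
  · simp [hy, Finset.disjoint_right.1 h.1 hx]

theorem sum_eq_one_of_mem_convexHull [DecidableEq V] (h : IsBipartition G X Y) {f : V → ℝ}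
    (hf : f ∈ convexHull ℝ (edgeVecs G)) : ∑ v ∈ X, f v = 1 := by
  have hlin : IsLinearMap ℝ fun g : V → ℝ => ∑ v ∈ X, g v :=
    ⟨fun _ _ => Finset.sum_add_distrib, fun _ _ => (Finset.mul_sum _ _ _).symm⟩
  refine convexHull_min (t := {g | ∑ v ∈ X, g v = 1}) ?_ (convex_hyperplane hlin 1) hf
  rintro _ ⟨x, y, hxy, rfl⟩
  exact h.sum_edgeVec hxy

theorem mul_eq_one_of_one_le [DecidableEq V] (h : IsBipartition G X Y) {n : ℕ} (hX : X.card = n)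
    {f : V → ℝ} (hf : f ∈ convexHull ℝ (edgeVecs G)) (hle : ∀ v ∈ X, 1 ≤ (n : ℝ) * f v) :
    ∀ v ∈ X, (n : ℝ) * f v = 1 := by
  have hsum : ∑ v ∈ X, (1 : ℝ) = ∑ v ∈ X, (n : ℝ) * f v := by
    rw [← Finset.mul_sum, h.sum_eq_one_of_mem_convexHull hf, Finset.sum_const, hX]
    simp
  exact fun v hv => ((Finset.sum_eq_sum_iff_of_le hle).1 hsum v hv).symm

theorem smul_eq_one_of_mem_intrinsicInterior [DecidableEq V] (h : IsBipartition G X Y) {n : ℕ}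
    (hn : 0 < n) (hX : X.card = n) (hY : Y.card = n) (hnbr : ∀ v, ∃ u, G.Adj v u) {g : V → ℝ}
    (hg : g ∈ intrinsicInterior ℝ (convexHull ℝ (edgeVecs G)))
    (hint : ∀ v, ∃ k : ℤ, (n : ℝ) * g v = k) : (n : ℝ) • g = 1 := by
  have hle : ∀ v, 1 ≤ (n : ℝ) * g v := by
    intro v
    obtain ⟨u, hu⟩ := hnbr v
    obtain ⟨k, hk⟩ := hint v
    have hpos : (0 : ℝ) < k :=
      hk ▸ mul_pos (Nat.cast_pos.2 hn) (pos_of_mem_intrinsicInterior_convexHull_edgeVecs hg hu)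
    rw [hk]
    exact_mod_cast Int.cast_pos.1 hpos
  have hgC := intrinsicInterior_subset hg
  funext v
  rcases h.mem_or_mem v with hv | hv
  · exact h.mul_eq_one_of_one_le hX hgC (fun v _ => hle v) v hv
  · exact h.symm.mul_eq_one_of_one_le hY hgC (fun v _ => hle v) v hv

end IsBipartition

theorem stmt4_general {V : Type*} [Fintype V] [DecidableEq V] (G : SimpleGraph V)
    (X Y : Finset V) (n : ℕ)
    (hbip : IsBipartition G X Y) (hX : X.card = n) (hY : Y.card = n)
    (hmc : MatchingCovered G) :
    (1 : V → ℝ) ∈ intrinsicInterior ℝ ((n : ℝ) • convexHull ℝ (edgeVecs G)) ∧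
      ∀ f : V → ℝ, f ∈ intrinsicInterior ℝ ((n : ℝ) • convexHull ℝ (edgeVecs G)) →
        (∀ v : V, ∃ k : ℤ, f v = (k : ℝ)) → f = 1 := by
  obtain ⟨hconn, hmatch⟩ := hmc
  have hcard : Fintype.card V = 2 * n := by rw [hbip.card_univ, hX, hY, two_mul]
  have hn : 0 < n := by have := hconn.nonempty; have := Fintype.card_pos (α := V); omega
  have : Nontrivial V := Fintype.one_lt_card_iff_nontrivial.1 (by omega)
  have hnbr : ∀ v, ∃ u, G.Adj v u := hconn.preconnected.exists_adj_of_nontrivial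
  have hnR : (n : ℝ) ≠ 0 := Nat.cast_ne_zero.2 hn.ne'
  rw [intrinsicInterior_smul hnR]
  refine ⟨?_, ?_⟩
  · obtain ⟨u, hu⟩ := hnbr (Classical.arbitrary V)
    have hscale : (n : ℝ) * (2 / Fintype.card V) = 1 := by
      rw [hcard, Nat.cast_mul, Nat.cast_two]
      field_simp
    simpa [smul_smul, hscale] using Set.smul_mem_smul_set (a := (n : ℝ))
      (two_div_card_smul_one_mem_intrinsicInterior_convexHull_edgeVecs hmatch hu)
  · rintro _ ⟨g, hg, rfl⟩ hint
    exact hbip.smul_eq_one_of_mem_intrinsicInterior hn hX hY hnbr hg hint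

theorem stmt4 {V : Type*} [Fintype V] [DecidableEq V] (G : SimpleGraph V)
    (X Y : Finset V) (n : ℕ)
    (hbip : IsBipartition G X Y) (hX : X.card = n) (hY : Y.card = n)
    (hmc : MatchingCovered G) (h2 : TwoConnected G) :
    (1 : V → ℝ) ∈ intrinsicInterior ℝ ((n : ℝ) • convexHull ℝ (edgeVecs G)) ∧
      ∀ f : V → ℝ, f ∈ intrinsicInterior ℝ ((n : ℝ) • convexHull ℝ (edgeVecs G)) →
        (∀ v : V, ∃ k : ℤ, f v = (k : ℝ)) → f = 1 :=
  stmt4_general G X Y n hbip hX hY hmc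
end

section
/- Let G be a 2-connected bipartite graph with bipartition X ⊔ Y, and let (x, y) ∈ X × Y be a non-edge of G. Then there exists an acceptable set T ⊆ X with x ∈ T and y ∉ N_G(T). Specifically, one may take T to be the set of X-vertices in the connected component containing x of the induced subgraph on (X \ N_G(y)) ⊔ (Y \ {y}). -/
attribute [local instance] Classical.propDecidable

/-!
Let `C` be the connected component of `x` in `G - y - N(y)` and `T = C ∩ X`. A neighbour of a
vertex of `T` lies in `Y \ {y}`, hence in `G - y - N(y)` and so in `C`; conversely every vertex of
`C ∩ Y` has a neighbour in `C`, necessarily in `X`. Thus `T ∪ N(T) = C`, and the complementary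
side of `T` is `V \ C`. A vertex outside `C` with a neighbour in `C` must be `y` or adjacent to
`y`, so a path of `G - y` from any vertex outside `C` to `x` can be stopped at its first entry
into `C` and redirected to `y`: `V \ C` is connected. It contains `y` and its neighbours.
-/

namespace SimpleGraph

variable {V : Type*} {G : SimpleGraph V}

lemma reachable_of_walk_leaving {D : Set V} {y : V} (hy : y ∈ D)
    (hbdry : ∀ a ∈ D, a ≠ y → ∀ c ∉ D, G.Adj a c → G.Adj a y) {a z : {u // u ≠ y}}
    (p : (G.induce {u | u ≠ y}).Walk a z) (ha : a.1 ∈ D) (hz : z.1 ∉ D) :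
    (G.induce D).Reachable ⟨a, ha⟩ ⟨y, hy⟩ := by
  induction p with
  | nil => exact absurd ha hz
  | @cons a c z hac _ ih =>
    by_cases hc : c.1 ∈ D
    · exact (show (G.induce D).Adj ⟨a, ha⟩ ⟨c, hc⟩ from hac).reachable.trans (ih hc hz)
    · exact (show (G.induce D).Adj ⟨a, ha⟩ ⟨y, hy⟩ from hbdry a ha a.2 c hc hac).reachable

lemma connected_induce_of_boundary_adj {D : Set V} {y z : V} (hy : y ∈ D) (hz : z ∉ D)
    (hG : (G.induce {u | u ≠ y}).Preconnected)
    (hbdry : ∀ a ∈ D, a ≠ y → ∀ c ∉ D, G.Adj a c → G.Adj a y) :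
    (G.induce D).Connected := by
  rw [connected_iff_exists_forall_reachable]
  refine ⟨⟨y, hy⟩, fun ⟨a, ha⟩ => ?_⟩
  by_cases hay : a = y
  · subst hay
    rfl
  have hzy : z ≠ y := fun h => hz (h ▸ hy)
  obtain ⟨p⟩ := hG ⟨a, hay⟩ ⟨z, hzy⟩
  exact (reachable_of_walk_leaving hy hbdry p ha hz).symm

/-- The component of `x` in `G[S]`, taken in the spanning graph on `V` carrying the edges of
`G[S]`; it is `{x}` when `x ∉ S`. -/
def inducedComponent (G : SimpleGraph V) (S : Set V) (x : V) : Set V :=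
  ((G.induce S).spanningCoe.connectedComponentMk x).supp

variable {S : Set V} {x v w : V}

lemma spanningCoe_induce_adj :
    (G.induce S).spanningCoe.Adj v w ↔ G.Adj v w ∧ v ∈ S ∧ w ∈ S := by
  simp

lemma mem_inducedComponent_self : x ∈ G.inducedComponent S x :=
  ConnectedComponent.connectedComponentMk_mem

lemma exists_adj_of_mem_inducedComponent (hv : v ∈ G.inducedComponent S x) (hvx : v ≠ x) :
    ∃ t ∈ G.inducedComponent S x, (G.induce S).spanningCoe.Adj t v := by
  obtain ⟨p⟩ := ConnectedComponent.exact ((ConnectedComponent.mem_supp_iff _ _).mp hv)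
  have hadj := p.adj_snd (p.not_nil_of_ne hvx)
  exact ⟨p.snd, ConnectedComponent.mem_supp_of_adj_mem_supp _ hv hadj, hadj.symm⟩

lemma inducedComponent_subset (hx : x ∈ S) : G.inducedComponent S x ⊆ S := by
  intro v hv
  by_cases hvx : v = x
  · exact hvx ▸ hx
  obtain ⟨_, _, hadj⟩ := exists_adj_of_mem_inducedComponent hv hvx
  exact (spanningCoe_induce_adj.mp hadj).2.2

lemma mem_inducedComponent_of_adj (hx : x ∈ S) (hv : v ∈ G.inducedComponent S x)
    (hw : w ∈ S) (hvw : G.Adj v w) : w ∈ G.inducedComponent S x :=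
  ConnectedComponent.mem_supp_of_adj_mem_supp _ hv
    (spanningCoe_induce_adj.mpr ⟨hvw, inducedComponent_subset hx hv, hw⟩)

lemma connected_induce_inducedComponent : (G.induce (G.inducedComponent S x)).Connected :=
  (ConnectedComponent.connected_toSimpleGraph _).mono fun _ _ h => G.spanningCoe_induce_le S h

lemma connected_induce_compl_inducedComponent {y : V} (hx : x ∈ S) (hy : y ∉ S)
    (hS : ∀ v ∉ S, v ≠ y → G.Adj v y) (hG : (G.induce {u | u ≠ y}).Preconnected) :
    (G.induce (G.inducedComponent S x)ᶜ).Connected := by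
  refine connected_induce_of_boundary_adj (fun h => hy (inducedComponent_subset hx h))
    (not_not.mpr mem_inducedComponent_self) hG fun a ha hay c hc hac => hS a (fun haS => ?_) hay
  exact ha (mem_inducedComponent_of_adj hx (not_not.mp hc) haS hac.symm)

end SimpleGraph

open SimpleGraph

section Bipartite

variable {V : Type*} [Fintype V] {G : SimpleGraph V} {X Y : Finset V} {u v : V}

namespace IsBipartition

lemma mem_left_or_mem_right (hbip : IsBipartition G X Y) (v : V) : v ∈ X ∨ v ∈ Y :=
  Finset.mem_union.mp (hbip.2.1 ▸ Finset.mem_univ v)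

lemma notMem_right (hbip : IsBipartition G X Y) (hv : v ∈ X) : v ∉ Y :=
  Finset.disjoint_left.mp hbip.1 hv

lemma mem_right_of_adj (hbip : IsBipartition G X Y) (hu : u ∈ X) (huv : G.Adj u v) : v ∈ Y :=
  (hbip.2.2 u v huv).elim And.right fun h => absurd h.1 (hbip.notMem_right hu)

lemma mem_left_of_adj (hbip : IsBipartition G X Y) (hv : v ∈ Y) (huv : G.Adj u v) : u ∈ X :=
  (hbip.2.2 u v huv).elim And.left fun h => absurd hv (hbip.notMem_right h.2)

lemma not_adj_of_mem_right (hbip : IsBipartition G X Y) (hu : u ∈ Y) (hv : v ∈ Y) :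
    ¬G.Adj u v :=
  fun huv => hbip.notMem_right (hbip.mem_left_of_adj hv huv) hu

end IsBipartition

lemma nbhd_filter_mem_inducedComponent (hbip : IsBipartition G X Y) {S : Set V} {x : V}
    (hxS : x ∈ S) (hxX : x ∈ X) (hS : ∀ t ∈ S, t ∈ X → ∀ u, G.Adj t u → u ∈ S) :
    nbhd G (X.filter (· ∈ G.inducedComponent S x)) =
      Y.filter (· ∈ G.inducedComponent S x) := by
  ext u
  simp only [nbhd, Finset.mem_filter, Finset.mem_univ, true_and]
  constructor
  · rintro ⟨t, ⟨htX, htC⟩, htu⟩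
    have huS := hS t (inducedComponent_subset hxS htC) htX u htu
    exact ⟨hbip.mem_right_of_adj htX htu, mem_inducedComponent_of_adj hxS htC huS htu⟩
  · rintro ⟨huY, huC⟩
    have hux : u ≠ x := fun h => hbip.notMem_right hxX (h ▸ huY)
    obtain ⟨t, htC, htu⟩ := exists_adj_of_mem_inducedComponent huC hux
    have htu := (spanningCoe_induce_adj.mp htu).1
    exact ⟨t, ⟨hbip.mem_left_of_adj huY htu, htC⟩, htu⟩

lemma acceptable_filter_mem (hbip : IsBipartition G X Y) {C : Set V}
    (hN : nbhd G (X.filter (· ∈ C)) = Y.filter (· ∈ C)) (hne : ∃ x ∈ X, x ∈ C)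
    (hC : (G.induce C).Connected) (hCc : (G.induce Cᶜ).Connected)
    (hedge : ∃ a b, a ∉ C ∧ b ∉ C ∧ G.Adj a b) :
    Acceptable G X Y (X.filter (· ∈ C)) := by
  have hunion : ∀ (p : V → Prop) [DecidablePred p],
      ((X.filter p ∪ Y.filter p : Finset V) : Set V) = {v | p v} := by
    intro p _
    ext v
    simp only [← Finset.filter_union, hbip.2.1, Finset.coe_filter, Finset.mem_univ, true_and]
  have hside : ∀ A : Finset V, A \ A.filter (· ∈ C) = A.filter (· ∉ C) := fun A =>
    (Finset.filter_not _ _).symm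
  obtain ⟨x, hxX, hxC⟩ := hne
  obtain ⟨a, b, haC, hbC, hab⟩ := hedge
  refine ⟨⟨x, Finset.mem_filter.mpr ⟨hxX, hxC⟩⟩, Finset.filter_subset _ _, ?_, ?_, ?_⟩
  · rwa [hN, hunion]
  · rwa [hN, hside, hside, hunion]
  · simp only [hN, hside, Finset.mem_filter]
    rcases hbip.mem_left_or_mem_right a with haX | haY
    · exact ⟨a, ⟨haX, haC⟩, b, ⟨hbip.mem_right_of_adj haX hab, hbC⟩, hab⟩
    · exact ⟨b, ⟨hbip.mem_left_of_adj haY hab.symm, hbC⟩, a, ⟨haY, haC⟩, hab.symm⟩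

end Bipartite

theorem stmt10 {V : Type*} [Fintype V] (G : SimpleGraph V) (X Y : Finset V)
    (hbip : IsBipartition G X Y) (h2 : TwoConnected G)
    (x y : V) (hx : x ∈ X) (hy : y ∈ Y) (hxy : ¬ G.Adj x y) :
    ∃ T : Finset V, Acceptable G X Y T ∧ x ∈ T ∧ y ∉ nbhd G T := by
  have hxy' : x ≠ y := fun h => hbip.notMem_right hx (h ▸ hy)
  set S : Set V := {v | v ≠ y ∧ ¬G.Adj v y}
  set C := G.inducedComponent S x
  have hxS : x ∈ S := ⟨hxy', hxy⟩
  have hCS : C ⊆ S := inducedComponent_subset hxS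
  have hS_closed : ∀ t ∈ S, t ∈ X → ∀ u, G.Adj t u → u ∈ S := fun t ht htX u htu =>
    ⟨fun h => ht.2 (h ▸ htu),
      hbip.not_adj_of_mem_right (hbip.mem_right_of_adj htX htu) hy⟩
  have hN := nbhd_filter_mem_inducedComponent hbip hxS hx hS_closed
  have hyC : y ∉ C := fun h => (hCS h).1 rfl
  have : Nontrivial V := ⟨x, y, hxy'⟩
  obtain ⟨u, hyu⟩ := h2.1.preconnected.exists_adj_of_nontrivial y
  have huC : u ∉ C := fun h => (hCS h).2 hyu.symm
  have hCc : (G.induce Cᶜ).Connected := connected_induce_compl_inducedComponent hxS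
    (fun h => h.1 rfl) (fun v hv hvy => not_not.mp fun h => hv ⟨hvy, h⟩) (h2.2 y).preconnected
  refine ⟨X.filter (· ∈ C),
    acceptable_filter_mem hbip hN ⟨x, hx, mem_inducedComponent_self⟩
      connected_induce_inducedComponent hCc ⟨y, u, hyC, huC, hyu⟩, ?_, ?_⟩
  · exact Finset.mem_filter.mpr ⟨hx, mem_inducedComponent_self⟩
  · rw [hN, Finset.mem_filter]
    exact fun h => hyC h.2
end

section
/- Let G be a 2-connected matching-covered bipartite graph with bipartition X ⊔ Y, and let T ⊆ X be a tight acceptable set. If a ∈ T, b ∈ Y \ N_G(T) and {a,b} is a non-edge, then {a,b} ∉ Fill(G); consequently, in the graph Ĝ obtained by adjoining all edges of Fill(G) to G, one has N_Ĝ(T) = N_G(T), and T remains a tight acceptable set for Ĝ. -/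
attribute [local instance] Classical.propDecidable

/-- `fillRel G X Y x y` holds when `{x, y}` (with `x ∈ X`, `y ∈ Y`) is a non-edge of `G`
that is not separated by any tight acceptable set `T ⊆ X`. -/
def fillRel {V : Type*} [Fintype V] (G : SimpleGraph V) (X Y : Finset V) : V → V → Prop :=
  fun x y => x ∈ X ∧ y ∈ Y ∧ ¬ G.Adj x y ∧
    ¬ ∃ T : Finset V, Acceptable G X Y T ∧ Tight G T ∧ x ∈ T ∧ y ∉ nbhd G T

/-- The graph `Ĝ` obtained from `G` by adjoining all the non-edges in `Fill(G)`. -/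
def fillGraph {V : Type*} [Fintype V] (G : SimpleGraph V) (X Y : Finset V) : SimpleGraph V :=
  G ⊔ SimpleGraph.fromRel (fillRel G X Y)

section

variable {V : Type*} [Fintype V]

lemma nbhd_mono {G H : SimpleGraph V} (hGH : G ≤ H) (A : Finset V) : nbhd G A ⊆ nbhd H A := by
  intro y hy
  simp only [nbhd, Finset.mem_filter, Finset.mem_univ, true_and] at hy ⊢
  obtain ⟨x, hx, hxy⟩ := hy
  exact ⟨x, hx, hGH hxy⟩

lemma Tight.of_nbhd_eq {G H : SimpleGraph V} {T : Finset V} (hnb : nbhd H T = nbhd G T)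
    (hT : Tight G T) : Tight H T := by
  rwa [Tight, hnb]

lemma Acceptable.of_le_of_nbhd_eq {G H : SimpleGraph V} {X Y T : Finset V} (hGH : G ≤ H)
    (hnb : nbhd H T = nbhd G T) (hT : Acceptable G X Y T) : Acceptable H X Y T := by
  obtain ⟨hne, hTX, hinner, houter, x, hx, y, hy, hxy⟩ := hT
  rw [Acceptable, hnb]
  exact ⟨hne, hTX, hinner.mono fun _ _ h => hGH h, houter.mono fun _ _ h => hGH h,
    x, hx, y, hy, hGH hxy⟩

lemma le_fillGraph (G : SimpleGraph V) (X Y : Finset V) : G ≤ fillGraph G X Y := le_sup_left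

lemma not_fillRel_of_mem_of_notMem_nbhd {G : SimpleGraph V} {X Y T : Finset V}
    (hT : Acceptable G X Y T) (hTt : Tight G T) {a b : V} (ha : a ∈ T) (hb : b ∉ nbhd G T) :
    ¬ fillRel G X Y a b :=
  fun hfill => hfill.2.2.2 ⟨T, hT, hTt, ha, hb⟩

lemma nbhd_fillGraph_of_acceptable_of_tight {G : SimpleGraph V} {X Y T : Finset V}
    (hXY : Disjoint X Y) (hT : Acceptable G X Y T) (hTt : Tight G T) :
    nbhd (fillGraph G X Y) T = nbhd G T := by
  refine subset_antisymm (fun b hb => ?_) (nbhd_mono (le_fillGraph G X Y) T)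
  by_contra hbT
  simp only [nbhd, Finset.mem_filter, Finset.mem_univ, true_and] at hb
  obtain ⟨a, ha, hab | hab⟩ := hb
  · exact hbT (by simpa [nbhd] using ⟨a, ha, hab⟩)
  · rcases (SimpleGraph.fromRel_adj _ a b).mp hab |>.2 with hfill | hfill
    · exact not_fillRel_of_mem_of_notMem_nbhd hT hTt ha hbT hfill
    -- a fill pair is oriented from `X` to `Y`, while `a ∈ T ⊆ X`
    · exact Finset.disjoint_left.mp hXY (hT.2.1 ha) hfill.2.1

end

theorem stmt15_general {V : Type*} [Fintype V] (G : SimpleGraph V) (X Y : Finset V)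
    (hbip : IsBipartition G X Y)
    (T : Finset V) (hT : Acceptable G X Y T) (hTt : Tight G T) :
    (∀ a ∈ T, ∀ b ∈ Y \ nbhd G T, ¬ G.Adj a b → ¬ fillRel G X Y a b) ∧
      nbhd (fillGraph G X Y) T = nbhd G T ∧
      Tight (fillGraph G X Y) T ∧
      Acceptable (fillGraph G X Y) X Y T := by
  have hnb := nbhd_fillGraph_of_acceptable_of_tight hbip.1 hT hTt
  exact ⟨fun a ha b hb _ =>
      not_fillRel_of_mem_of_notMem_nbhd hT hTt ha (Finset.mem_sdiff.mp hb).2,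
    hnb, hTt.of_nbhd_eq hnb, hT.of_le_of_nbhd_eq (le_fillGraph G X Y) hnb⟩

theorem stmt15 {V : Type*} [Fintype V] (G : SimpleGraph V) (X Y : Finset V)
    (hbip : IsBipartition G X Y) (hmc : MatchingCovered G) (h2 : TwoConnected G)
    (T : Finset V) (hT : Acceptable G X Y T) (hTt : Tight G T) :
    (∀ a ∈ T, ∀ b ∈ Y \ nbhd G T, ¬ G.Adj a b → ¬ fillRel G X Y a b) ∧
      nbhd (fillGraph G X Y) T = nbhd G T ∧
      Tight (fillGraph G X Y) T ∧
      Acceptable (fillGraph G X Y) X Y T :=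
  stmt15_general G X Y hbip T hT hTt
end
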